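/- Let F ⊆ ℝ² be the fractal square with base n = 3 and digit set D = {(0,0),(1,0),(2,0),(2,1),(0,2)}, i.e. the unique nonempty compact set with F = ⋃_{d∈D}(F+d)/3. Then every connected component of F is either a single point or a line segment parallel to the first coordinate axis, i.e. a set of the form [a,b] × {c} with a < b. -/

import Mathlib

/-!
Let `W` be the union of the integer horizontal translates of `F` with the lines `y = 0` and
`y = 1`, and let `M` be the supremum of the heights of the compact connected subsets of `W`.
Magnified by `3`, `W` falls into three unit layers, each of which, moved down to `[0, 1]`, lies in
`W` again. So for a compact connected `K ⊆ W`, the part of `3 • K` inside one layer has height at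
most `M`; by boundary bumping, `3 • K` has height at most `2 * M` if it spans two adjacent layers;
and it cannot cross the middle layer, since no connected subset of `W` joins `y = 0` to `y = 1`:
the copies of the top-left piece `F / 3 + (0, 2/3)` are uniformly separated from the rest of `W`.
Hence `3 * M ≤ 2 * M`, so `M = 0` and every connected subset of `F` is horizontal.
-/

open Set
open scoped Pointwise

section Topology

variable {X : Type*} [TopologicalSpace X]

theorem IsCompact.connectedComponentIn {S : Set X} (hS : IsCompact S) (x : X) :
    IsCompact (connectedComponentIn S x) := by
  by_cases hx : x ∈ S
  · have : CompactSpace S := isCompact_iff_compactSpace.mp hS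
    rw [connectedComponentIn_eq_image hx]
    exact isClosed_connectedComponent.isCompact.image continuous_subtype_val
  · simp [connectedComponentIn_eq_empty hx]

theorem exists_isClopen_disjoint_of_disjoint_connectedComponent [T2Space X] [CompactSpace X]
    {x : X} {B : Set X} (hB : IsClosed B) (h : Disjoint (connectedComponent x) B) :
    ∃ U, IsClopen U ∧ x ∈ U ∧ Disjoint U B := by
  rw [connectedComponent_eq_iInter_isClopen, disjoint_iff_inter_eq_empty, inter_comm] at h
  obtain ⟨u, hu⟩ := hB.isCompact.elim_finite_subfamily_closed _ (fun s => s.2.1.isClosed) h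
  refine ⟨⋂ s ∈ u, s.1, isClopen_biInter_finset fun s _ => s.2.1,
    mem_iInter₂.2 fun s _ => s.2.2, ?_⟩
  rwa [disjoint_iff_inter_eq_empty, inter_comm]

variable {α : Type*} [LinearOrder α] [TopologicalSpace α] [OrderClosedTopology α]

/-- The boundary bumping theorem. -/
theorem exists_mem_connectedComponentIn_Ici_eq [T2Space X] {S : Set X}
    (hS : IsCompact S) (hSc : IsPreconnected S) {g : X → α} (hg : Continuous g) {p q : X}
    (hp : p ∈ S) (hq : q ∈ S) {t : α} (hpt : g p ≤ t) (htq : t ≤ g q) :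
    ∃ z ∈ connectedComponentIn (S ∩ g ⁻¹' Ici t) q, g z = t := by
  set A := S ∩ g ⁻¹' Ici t
  have hA : IsCompact A := hS.inter_right (isClosed_le continuous_const hg)
  have : CompactSpace A := isCompact_iff_compactSpace.mp hA
  have hqA : q ∈ A := ⟨hq, htq⟩
  by_contra! hne
  obtain ⟨U, hU, hqU, hUt⟩ := exists_isClopen_disjoint_of_disjoint_connectedComponent
    (x := (⟨q, hqA⟩ : A)) (isClosed_eq (hg.comp continuous_subtype_val) continuous_const)
    (disjoint_left.2 fun a ha hat => hne a (by
      rw [connectedComponentIn_eq_image hqA]; exact mem_image_of_mem _ ha) hat)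
  have hUgt : ∀ a ∈ U, t < g a := fun a ha =>
    lt_of_le_of_ne a.2.2 fun h => disjoint_left.1 hUt ha h.symm
  have hclosed : ∀ V : Set A, IsClosed V → IsClosed ((↑) '' V : Set X) := fun V hV =>
    (hV.isCompact.image continuous_subtype_val).isClosed
  have hsplit := (isPreconnected_iff_subset_of_fully_disjoint_closed hS.isClosed).1 hSc
    ((↑) '' U) ((↑) '' Uᶜ ∪ S ∩ g ⁻¹' Iic t) (hclosed U hU.isClosed)
    ((hclosed _ hU.compl.isClosed).union (hS.isClosed.inter (isClosed_le hg continuous_const)))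
    (fun s hs => by
      rcases le_total (g s) t with h | h
      · exact Or.inr (Or.inr ⟨hs, h⟩)
      · by_cases hsU : (⟨s, hs, h⟩ : A) ∈ U
        · exact Or.inl ⟨_, hsU, rfl⟩
        · exact Or.inr (Or.inl ⟨_, hsU, rfl⟩))
    (by
      rw [disjoint_left]
      rintro _ ⟨a, ha, rfl⟩ (⟨b, hb, hba⟩ | ⟨-, hat⟩)
      · exact hb (Subtype.val_injective hba ▸ ha)
      · exact (hUgt a ha).not_ge hat)
  rcases hsplit with h | h
  · obtain ⟨a, ha, rfl⟩ := h hp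
    exact (hUgt a ha).not_ge hpt
  · rcases h hq with ⟨b, hb, hbq⟩ | ⟨-, hqt⟩
    · exact hb ((Subtype.ext hbq : b = ⟨q, hqA⟩) ▸ hqU)
    · exact (hUgt _ hqU).not_ge hqt

theorem exists_mem_connectedComponentIn_Iic_eq [T2Space X] {S : Set X}
    (hS : IsCompact S) (hSc : IsPreconnected S) {g : X → α} (hg : Continuous g) {p q : X}
    (hp : p ∈ S) (hq : q ∈ S) {t : α} (hpt : g p ≤ t) (htq : t ≤ g q) :
    ∃ z ∈ connectedComponentIn (S ∩ g ⁻¹' Iic t) p, g z = t :=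
  exists_mem_connectedComponentIn_Ici_eq (α := αᵒᵈ) hS hSc hg hq hp htq hpt

theorem exists_isPreconnected_subset_preimage_Icc [T2Space X] {S : Set X}
    (hS : IsCompact S) (hSc : IsPreconnected S) {g : X → α} (hg : Continuous g) {p q : X}
    (hp : p ∈ S) (hq : q ∈ S) {t₁ t₂ : α} (hp₁ : g p ≤ t₁) (h₁₂ : t₁ ≤ t₂) (h₂q : t₂ ≤ g q) :
    ∃ T, IsCompact T ∧ IsPreconnected T ∧ T ⊆ S ∩ g ⁻¹' Icc t₁ t₂ ∧
      (∃ z ∈ T, g z = t₁) ∧ ∃ z ∈ T, g z = t₂ := by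
  set S₁ := connectedComponentIn (S ∩ g ⁻¹' Ici t₁) q
  have hS₁ : IsCompact S₁ :=
    (hS.inter_right (isClosed_le continuous_const hg)).connectedComponentIn q
  have hqS₁ : q ∈ S₁ := mem_connectedComponentIn ⟨hq, h₁₂.trans h₂q⟩
  obtain ⟨z₁, hz₁, hgz₁⟩ := exists_mem_connectedComponentIn_Ici_eq hS hSc hg hp hq hp₁
    (h₁₂.trans h₂q)
  obtain ⟨z₂, hz₂, hgz₂⟩ := exists_mem_connectedComponentIn_Iic_eq
    hS₁ isPreconnected_connectedComponentIn hg hz₁ hqS₁ (hgz₁.trans_le h₁₂) h₂q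
  have hS₁sub : S₁ ⊆ S ∩ g ⁻¹' Ici t₁ := connectedComponentIn_subset _ _
  refine ⟨connectedComponentIn (S₁ ∩ g ⁻¹' Iic t₂) z₁,
    (hS₁.inter_right (isClosed_le hg continuous_const)).connectedComponentIn z₁,
    isPreconnected_connectedComponentIn, fun r hr => ?_,
    ⟨z₁, mem_connectedComponentIn ⟨hz₁, hgz₁.trans_le h₁₂⟩, hgz₁⟩, z₂, hz₂, hgz₂⟩
  obtain ⟨hrS₁, hrt₂⟩ := connectedComponentIn_subset _ _ hr
  exact ⟨(hS₁sub hrS₁).1, (hS₁sub hrS₁).2, hrt₂⟩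

theorem IsPreconnected.subset_or_subset_of_le_dist {Y : Type*} [PseudoMetricSpace Y]
    {S A B : Set Y} {δ : ℝ} (hδ : 0 < δ) (hS : IsPreconnected S) (hSAB : S ⊆ A ∪ B)
    (hAB : ∀ a ∈ A, ∀ b ∈ B, δ ≤ dist a b) : S ⊆ A ∨ S ⊆ B := by
  have hdisj : Disjoint (Metric.thickening (δ / 2) A) (Metric.thickening (δ / 2) B) := by
    refine disjoint_left.2 fun x hxA hxB => ?_
    obtain ⟨a, ha, hxa⟩ := Metric.mem_thickening_iff.1 hxA
    obtain ⟨b, hb, hxb⟩ := Metric.mem_thickening_iff.1 hxB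
    have := dist_triangle_left a b x
    linarith [hAB a ha b hb]
  have hsub := hSAB.trans (union_subset_union (Metric.self_subset_thickening (half_pos hδ) A)
    (Metric.self_subset_thickening (half_pos hδ) B))
  refine (hS.subset_or_subset Metric.isOpen_thickening Metric.isOpen_thickening hdisj hsub).imp
    (fun h x hx => ?_) (fun h x hx => ?_)
  · exact (hSAB hx).resolve_right fun hB =>
      disjoint_left.1 hdisj (h hx) (Metric.self_subset_thickening (half_pos hδ) B hB)
  · exact (hSAB hx).resolve_left fun hA =>
      disjoint_left.1 hdisj (Metric.self_subset_thickening (half_pos hδ) A hA) (h hx)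

end Topology

theorem eq_singleton_or_eq_Icc_prod_singleton {S : Set (ℝ × ℝ)} (hS : IsCompact S)
    (hSc : IsPreconnected S) {x : ℝ × ℝ} (hx : x ∈ S) (hflat : ∀ p ∈ S, p.2 = x.2) :
    (∃ p, S = {p}) ∨ ∃ a b c : ℝ, a < b ∧ S = Icc a b ×ˢ {c} := by
  set I := Prod.fst '' S
  have hI : IsCompact I := hS.image continuous_fst
  have hIne : I.Nonempty := ⟨_, mem_image_of_mem _ hx⟩
  have hSI : S = Icc (sInf I) (sSup I) ×ˢ {x.2} := by
    rw [← eq_Icc_of_connected_compact ⟨hIne, hSc.image _ continuous_fst.continuousOn⟩ hI]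
    ext r
    refine ⟨fun hr => ⟨mem_image_of_mem _ hr, hflat r hr⟩, ?_⟩
    rintro ⟨⟨s, hs, hsr⟩, hr⟩
    rwa [← Prod.ext hsr ((hflat s hs).trans hr.symm)]
  rcases (csInf_le_csSup hIne hI.bddBelow hI.bddAbove).eq_or_lt with h | h
  · exact Or.inl ⟨(sInf I, x.2), by rw [hSI, ← h, Icc_self, singleton_prod_singleton]⟩
  · exact Or.inr ⟨_, _, _, h, hSI⟩

namespace FractalSquare

def IsTernarySubSelfSimilar (D : Set (ℤ × ℤ)) (F : Set (ℝ × ℝ)) : Prop :=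
  ∀ r ∈ F, ∃ q ∈ F, ∃ d ∈ D, 3 * r.1 = q.1 + d.1 ∧ 3 * r.2 = q.2 + d.2

theorem subset_Icc_zero_one {K : Set ℝ} (hK : IsCompact K)
    (h : ∀ y ∈ K, ∃ z ∈ K, ∃ c ∈ Icc (0 : ℝ) 2, 3 * y = z + c) : K ⊆ Icc 0 1 := by
  rcases K.eq_empty_or_nonempty with rfl | hne
  · exact empty_subset _
  obtain ⟨m, hmK, hm⟩ := hK.exists_isLeast hne
  obtain ⟨M, hMK, hM⟩ := hK.exists_isGreatest hne
  obtain ⟨z, hzK, c, hc, hmz⟩ := h m hmK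
  obtain ⟨z', hz'K, c', hc', hMz⟩ := h M hMK
  exact fun y hy => ⟨by linarith [hm hy, hm hzK, hc.1], by linarith [hM hy, hM hz'K, hc'.2]⟩

variable {D : Set (ℤ × ℤ)} {F : Set (ℝ × ℝ)}

theorem subset_unitSquare (hFc : IsCompact F) (hD : D ⊆ Icc 0 2 ×ˢ Icc 0 2)
    (h₃ : IsTernarySubSelfSimilar D F) : F ⊆ Icc 0 1 ×ˢ Icc 0 1 := by
  have cast_mem : ∀ n : ℤ, n ∈ Icc 0 2 → (n : ℝ) ∈ Icc 0 2 := fun n hn =>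
    ⟨by exact_mod_cast hn.1, by exact_mod_cast hn.2⟩
  have h₁ := subset_Icc_zero_one (hFc.image continuous_fst) (by
    rintro _ ⟨r, hr, rfl⟩
    obtain ⟨q, hq, d, hd, h1, -⟩ := h₃ r hr
    exact ⟨q.1, mem_image_of_mem _ hq, d.1, cast_mem _ (hD hd).1, h1⟩)
  have h₂ := subset_Icc_zero_one (hFc.image continuous_snd) (by
    rintro _ ⟨r, hr, rfl⟩
    obtain ⟨q, hq, d, hd, -, h2⟩ := h₃ r hr
    exact ⟨q.2, mem_image_of_mem _ hq, d.2, cast_mem _ (hD hd).2, h2⟩)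
  exact fun r hr => ⟨h₁ (mem_image_of_mem _ hr), h₂ (mem_image_of_mem _ hr)⟩

/-- Unlike `F` itself, this set contains each unit layer of `3 • band F` moved down to `[0, 1]`
(`mk_three_mul_sub_mem_band`); the translates and the two lines are exactly what that needs. -/
def band (F : Set (ℝ × ℝ)) : Set (ℝ × ℝ) :=
  {r | (∃ k : ℤ, (r.1 - k, r.2) ∈ F) ∨ r.2 = 0 ∨ r.2 = 1}

def NoVerticalCrossing (W : Set (ℝ × ℝ)) : Prop :=
  ∀ S ⊆ W, IsPreconnected S → ∀ p ∈ S, p.2 = 0 → ∀ q ∈ S, q.2 ≠ 1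

theorem subset_band : F ⊆ band F := fun r hr => Or.inl ⟨0, by simpa using hr⟩

theorem snd_mem_Icc_of_mem_band (h₁ : F ⊆ Icc 0 1 ×ˢ Icc 0 1) {r : ℝ × ℝ} (hr : r ∈ band F) :
    r.2 ∈ Icc (0 : ℝ) 1 := by
  rcases hr with ⟨k, hk⟩ | h | h
  · exact (h₁ hk).2
  all_goals simp [h]

theorem sub_eq_zero_or_sub_eq_one_or_eq {y : ℝ} {m i : ℤ} (hy : y ∈ Icc (0 : ℝ) 1)
    (hi : i ≤ y + m) (hi' : y + m ≤ i + 1) : y + m - i = 0 ∨ y + m - i = 1 ∨ m = i := by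
  have h₁ : i - 1 ≤ m := by
    have : ((i - 1 : ℤ) : ℝ) ≤ m := by push_cast; linarith [hy.2]
    exact_mod_cast this
  have h₂ : m ≤ i + 1 := by
    have : (m : ℝ) ≤ ((i + 1 : ℤ) : ℝ) := by push_cast; linarith [hy.1]
    exact_mod_cast this
  rcases (by omega : m = i - 1 ∨ m = i ∨ m = i + 1) with rfl | rfl | rfl
  · left; push_cast at hi ⊢; linarith [hy.2]
  · exact Or.inr (Or.inr rfl)
  · right; left; push_cast at hi' ⊢; linarith [hy.1]

theorem eq_or_eq_sub_one_of_cast_le {i n : ℤ} (h : (i : ℝ) ≤ n) (h' : (n : ℝ) ≤ i + 1) :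
    i = n ∨ i = n - 1 := by
  have : i ≤ n := by exact_mod_cast h
  have : n ≤ i + 1 := by exact_mod_cast h'
  omega

theorem mk_three_mul_sub_mem_band (h₁ : F ⊆ Icc 0 1 ×ˢ Icc 0 1)
    (h₃ : IsTernarySubSelfSimilar D F) {s : ℝ × ℝ} (hs : s ∈ band F) (i : ℤ)
    (hi : i ≤ 3 * s.2) (hi' : 3 * s.2 ≤ i + 1) : (3 * s.1, 3 * s.2 - i) ∈ band F := by
  rcases hs with ⟨k, hk⟩ | hs | hs
  · obtain ⟨q, hq, d, -, h1, h2⟩ := h₃ _ hk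
    rw [h2] at hi hi' ⊢
    rcases sub_eq_zero_or_sub_eq_one_or_eq (h₁ hq).2 hi hi' with h | h | h
    · exact Or.inr (Or.inl h)
    · exact Or.inr (Or.inr h)
    · refine Or.inl ⟨3 * k + d.1, ?_⟩
      convert hq using 1
      ext <;> push_cast [h] <;> linarith
  · rw [hs, mul_zero] at hi hi'
    rcases eq_or_eq_sub_one_of_cast_le (n := 0) (by simpa using hi) (by simpa using hi')
      with rfl | rfl <;> norm_num [band, hs]
  · rw [hs, mul_one] at hi hi'
    rcases eq_or_eq_sub_one_of_cast_le (n := 3) (by simpa using hi) (by simpa using hi')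
      with rfl | rfl <;> norm_num [band, hs]

noncomputable def bandOsc (F : Set (ℝ × ℝ)) : ℝ :=
  sSup {v | ∃ S ⊆ band F, IsCompact S ∧ IsPreconnected S ∧ ∃ p ∈ S, ∃ q ∈ S, v = |p.2 - q.2|}

theorem abs_sub_snd_le_bandOsc (h₁ : F ⊆ Icc 0 1 ×ˢ Icc 0 1) {S : Set (ℝ × ℝ)}
    (hSW : S ⊆ band F) (hS : IsCompact S) (hSc : IsPreconnected S) {p q : ℝ × ℝ}
    (hp : p ∈ S) (hq : q ∈ S) : |p.2 - q.2| ≤ bandOsc F := by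
  refine le_csSup ⟨1, ?_⟩ ⟨S, hSW, hS, hSc, p, hp, q, hq, rfl⟩
  rintro _ ⟨T, hTW, -, -, a, ha, b, hb, rfl⟩
  obtain ⟨ha₀, ha₁⟩ := snd_mem_Icc_of_mem_band h₁ (hTW ha)
  obtain ⟨hb₀, hb₁⟩ := snd_mem_Icc_of_mem_band h₁ (hTW hb)
  exact abs_le.2 ⟨by linarith, by linarith⟩

theorem bandOsc_nonneg (h₁ : F ⊆ Icc 0 1 ×ˢ Icc 0 1) : 0 ≤ bandOsc F := by
  simpa using abs_sub_snd_le_bandOsc h₁ (S := {(0, 0)}) (by simp [band]) isCompact_singleton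
    isPreconnected_singleton rfl rfl

theorem bandOsc_le {c : ℝ} (h : ∀ S ⊆ band F, IsCompact S → IsPreconnected S →
    ∀ p ∈ S, ∀ q ∈ S, |p.2 - q.2| ≤ c) : bandOsc F ≤ c := by
  refine csSup_le ⟨0, {(0, 0)}, by simp [band], isCompact_singleton, isPreconnected_singleton,
    _, rfl, _, rfl, by simp⟩ ?_
  rintro _ ⟨S, hSW, hS, hSc, p, hp, q, hq, rfl⟩
  exact h S hSW hS hSc p hp q hq

theorem abs_sub_snd_le_bandOsc_of_subset_smul (h₁ : F ⊆ Icc 0 1 ×ˢ Icc 0 1)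
    (h₃ : IsTernarySubSelfSimilar D F) {T : Set (ℝ × ℝ)} (hTW : T ⊆ (3 : ℝ) • band F)
    (hT : IsCompact T) (hTc : IsPreconnected T) (i : ℤ)
    (hTi : ∀ r ∈ T, i ≤ r.2 ∧ r.2 ≤ i + 1) {u v : ℝ × ℝ} (hu : u ∈ T) (hv : v ∈ T) :
    |u.2 - v.2| ≤ bandOsc F := by
  let φ : ℝ × ℝ → ℝ × ℝ := fun r => (r.1, r.2 - i)
  have hφ : Continuous φ := by fun_prop
  have hφT : φ '' T ⊆ band F := by
    rintro _ ⟨r, hr, rfl⟩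
    obtain ⟨s, hs, rfl⟩ := hTW hr
    have hi := hTi _ hr
    simp only [Prod.smul_snd, smul_eq_mul] at hi ⊢
    exact mk_three_mul_sub_mem_band h₁ h₃ hs i hi.1 hi.2
  simpa [φ] using abs_sub_snd_le_bandOsc h₁ hφT (hT.image hφ) (hTc.image φ hφ.continuousOn)
    (mem_image_of_mem φ hu) (mem_image_of_mem φ hv)

theorem sub_snd_le_two_mul_bandOsc (h₁ : F ⊆ Icc 0 1 ×ˢ Icc 0 1)
    (h₃ : IsTernarySubSelfSimilar D F) {S : Set (ℝ × ℝ)} (hSW : S ⊆ (3 : ℝ) • band F)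
    (hS : IsCompact S) (hSc : IsPreconnected S) (t : ℤ)
    (hSt : ∀ r ∈ S, t - 1 ≤ r.2 ∧ r.2 ≤ t + 1) {p q : ℝ × ℝ} (hp : p ∈ S) (hq : q ∈ S)
    (hpt : p.2 ≤ t) (htq : t ≤ q.2) : q.2 - p.2 ≤ 2 * bandOsc F := by
  obtain ⟨z₁, hz₁, hz₁t⟩ :=
    exists_mem_connectedComponentIn_Iic_eq hS hSc continuous_snd hp hq hpt htq
  obtain ⟨z₂, hz₂, hz₂t⟩ :=
    exists_mem_connectedComponentIn_Ici_eq hS hSc continuous_snd hp hq hpt htq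
  have hlow := abs_sub_snd_le_bandOsc_of_subset_smul h₁ h₃
    ((connectedComponentIn_subset _ _).trans (inter_subset_left.trans hSW))
    ((hS.inter_right (isClosed_le continuous_snd continuous_const)).connectedComponentIn p)
    isPreconnected_connectedComponentIn (t - 1) (fun r hr => by
      obtain ⟨hrS, hrt⟩ := connectedComponentIn_subset _ _ hr
      exact ⟨by push_cast; exact (hSt r hrS).1, by push_cast; linarith [mem_Iic.1 hrt]⟩)
    (mem_connectedComponentIn ⟨hp, hpt⟩) hz₁
  have hhigh := abs_sub_snd_le_bandOsc_of_subset_smul h₁ h₃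
    ((connectedComponentIn_subset _ _).trans (inter_subset_left.trans hSW))
    ((hS.inter_right (isClosed_le continuous_const continuous_snd)).connectedComponentIn q)
    isPreconnected_connectedComponentIn t (fun r hr => by
      obtain ⟨hrS, hrt⟩ := connectedComponentIn_subset _ _ hr
      exact ⟨mem_Ici.1 hrt, (hSt r hrS).2⟩)
    (mem_connectedComponentIn ⟨hq, htq⟩) hz₂
  rw [hz₁t, abs_le] at hlow
  rw [hz₂t, abs_le] at hhigh
  linarith [hlow.1, hhigh.2]

theorem snd_lt_two_of_subset_smul_band (h₁ : F ⊆ Icc 0 1 ×ˢ Icc 0 1)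
    (h₃ : IsTernarySubSelfSimilar D F)
    (hcross : NoVerticalCrossing (band F))
    {S : Set (ℝ × ℝ)} (hSW : S ⊆ (3 : ℝ) • band F) (hS : IsCompact S) (hSc : IsPreconnected S)
    {p q : ℝ × ℝ} (hp : p ∈ S) (hq : q ∈ S) (hp₁ : p.2 ≤ 1) : q.2 < 2 := by
  by_contra! hq₂
  obtain ⟨T, -, hTc, hTS, ⟨z₁, hz₁, hz₁1⟩, z₂, hz₂, hz₂2⟩ :=
    exists_isPreconnected_subset_preimage_Icc hS hSc continuous_snd hp hq hp₁ one_le_two hq₂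
  let φ : ℝ × ℝ → ℝ × ℝ := fun r => (r.1, r.2 - 1)
  have hφT : φ '' T ⊆ band F := by
    rintro _ ⟨r, hr, rfl⟩
    obtain ⟨hrS, hr₁, hr₂⟩ := hTS hr
    obtain ⟨s, hs, rfl⟩ := hSW hrS
    simp only [Prod.smul_snd, smul_eq_mul] at hr₁ hr₂ ⊢
    simpa [φ] using
      mk_three_mul_sub_mem_band h₁ h₃ hs 1 (by simpa using hr₁) (by push_cast; linarith)
  exact hcross _ hφT (hTc.image φ (by fun_prop)) _ (mem_image_of_mem φ hz₁)
    (by simp [φ, hz₁1]) _ (mem_image_of_mem φ hz₂) (by simp [φ, hz₂2]; norm_num)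

theorem sub_snd_le_two_mul_bandOsc_of_isMinOn_of_isMaxOn (h₁ : F ⊆ Icc 0 1 ×ˢ Icc 0 1)
    (h₃ : IsTernarySubSelfSimilar D F)
    (hcross : NoVerticalCrossing (band F))
    {S : Set (ℝ × ℝ)} (hSW : S ⊆ (3 : ℝ) • band F) (hS : IsCompact S) (hSc : IsPreconnected S)
    {a b : ℝ × ℝ} (ha : a ∈ S) (hb : b ∈ S) (hamin : IsMinOn Prod.snd S a)
    (hbmax : IsMaxOn Prod.snd S b) : b.2 - a.2 ≤ 2 * bandOsc F := by
  have hab : ∀ r ∈ S, a.2 ≤ r.2 ∧ r.2 ≤ b.2 := fun r hr => ⟨hamin hr, hbmax hr⟩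
  have one_layer : ∀ i : ℤ, i ≤ a.2 → b.2 ≤ i + 1 → b.2 - a.2 ≤ 2 * bandOsc F := by
    intro i hi hi'
    have := abs_sub_snd_le_bandOsc_of_subset_smul h₁ h₃ hSW hS hSc i
      (fun r hr => ⟨hi.trans (hab r hr).1, (hab r hr).2.trans hi'⟩) hb ha
    linarith [le_abs_self (b.2 - a.2), bandOsc_nonneg h₁]
  have two_layers : ∀ t : ℤ, t - 1 ≤ a.2 → a.2 ≤ t → t ≤ b.2 → b.2 ≤ t + 1 →
      b.2 - a.2 ≤ 2 * bandOsc F := fun t hat₁ hat hbt hbt₁ =>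
    sub_snd_le_two_mul_bandOsc h₁ h₃ hSW hS hSc t
      (fun r hr => ⟨hat₁.trans (hab r hr).1, (hab r hr).2.trans hbt₁⟩) ha hb hat hbt
  have ha₀ : 0 ≤ a.2 := by
    obtain ⟨s, hs, rfl⟩ := hSW ha
    simpa using (snd_mem_Icc_of_mem_band h₁ hs).1
  have hb₃ : b.2 ≤ 3 := by
    obtain ⟨s, hs, rfl⟩ := hSW hb
    simpa using (snd_mem_Icc_of_mem_band h₁ hs).2
  rcases le_total b.2 1 with hb₁ | hb₁
  · exact one_layer 0 (by simpa using ha₀) (by simpa using hb₁)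
  rcases le_total 2 a.2 with ha₂ | ha₂
  · exact one_layer 2 (by simpa using ha₂) (by norm_num; linarith)
  rcases le_total a.2 1 with ha₁ | ha₁ <;> rcases le_total b.2 2 with hb₂ | hb₂
  · exact two_layers 1 (by simpa using ha₀) (by simpa using ha₁) (by simpa using hb₁)
      (by norm_num; linarith)
  · exact absurd hb₂ (snd_lt_two_of_subset_smul_band h₁ h₃ hcross hSW hS hSc ha hb ha₁).not_ge
  · exact one_layer 1 (by simpa using ha₁) (by norm_num; linarith)
  · exact two_layers 2 (by norm_num; linarith) (by simpa using ha₂) (by simpa using hb₂)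
      (by norm_num; linarith)

theorem three_mul_abs_sub_snd_le (h₁ : F ⊆ Icc 0 1 ×ˢ Icc 0 1)
    (h₃ : IsTernarySubSelfSimilar D F)
    (hcross : NoVerticalCrossing (band F))
    {S : Set (ℝ × ℝ)} (hSW : S ⊆ band F) (hS : IsCompact S) (hSc : IsPreconnected S)
    {p q : ℝ × ℝ} (hp : p ∈ S) (hq : q ∈ S) : 3 * |p.2 - q.2| ≤ 2 * bandOsc F := by
  have hS' : IsCompact ((3 : ℝ) • S) := hS.image (continuous_const_smul _)
  have hne : ((3 : ℝ) • S).Nonempty := ⟨_, smul_mem_smul_set hp⟩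
  obtain ⟨a, ha, hamin⟩ := hS'.exists_isMinOn hne continuous_snd.continuousOn
  obtain ⟨b, hb, hbmax⟩ := hS'.exists_isMaxOn hne continuous_snd.continuousOn
  have hspan := sub_snd_le_two_mul_bandOsc_of_isMinOn_of_isMaxOn h₁ h₃ hcross
    (smul_set_mono hSW) hS' (hSc.image _ (continuous_const_smul _).continuousOn) ha hb hamin hbmax
  have hp₁ : a.2 ≤ 3 * p.2 := hamin (smul_mem_smul_set hp)
  have hp₂ : 3 * p.2 ≤ b.2 := hbmax (smul_mem_smul_set hp)
  have hq₁ : a.2 ≤ 3 * q.2 := hamin (smul_mem_smul_set hq)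
  have hq₂ : 3 * q.2 ≤ b.2 := hbmax (smul_mem_smul_set hq)
  rw [← abs_of_pos (by norm_num : (0 : ℝ) < 3), ← abs_mul, abs_le]
  constructor <;> linarith

theorem bandOsc_eq_zero (h₁ : F ⊆ Icc 0 1 ×ˢ Icc 0 1) (h₃ : IsTernarySubSelfSimilar D F)
    (hcross : NoVerticalCrossing (band F)) : bandOsc F = 0 := by
  have := bandOsc_le fun S hSW hS hSc p hp q hq =>
    (le_div_iff₀' (by norm_num : (0 : ℝ) < 3)).2
      (three_mul_abs_sub_snd_le h₁ h₃ hcross hSW hS hSc hp hq)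
  linarith [bandOsc_nonneg h₁]

theorem snd_eq_of_subset_band (h₁ : F ⊆ Icc 0 1 ×ˢ Icc 0 1) (h₃ : IsTernarySubSelfSimilar D F)
    (hcross : NoVerticalCrossing (band F))
    {S : Set (ℝ × ℝ)} (hSW : S ⊆ band F) (hS : IsCompact S) (hSc : IsPreconnected S)
    {p q : ℝ × ℝ} (hp : p ∈ S) (hq : q ∈ S) : p.2 = q.2 := by
  have := abs_sub_snd_le_bandOsc h₁ hSW hS hSc hp hq
  rw [bandOsc_eq_zero h₁ h₃ hcross] at this
  exact sub_eq_zero.1 (abs_nonpos_iff.1 this)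

def digits : Set (ℤ × ℤ) := {(0, 0), (1, 0), (2, 0), (2, 1), (0, 2)}

theorem digits_subset : digits ⊆ Icc 0 2 ×ˢ Icc 0 2 := by
  rintro d (rfl | rfl | rfl | rfl | rfl) <;> simp

theorem isTernarySubSelfSimilar_digits
    (hF : F = ⋃ d ∈ ({(0, 0), (1, 0), (2, 0), (2, 1), (0, 2)} : Set (ℝ × ℝ)),
      (fun x : ℝ × ℝ => (3 : ℝ)⁻¹ • (x + d)) '' F) :
    IsTernarySubSelfSimilar digits F := by
  intro r hr
  rw [hF] at hr
  simp only [mem_iUnion, mem_image, exists_prop] at hr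
  obtain ⟨d, hd, q, hq, rfl⟩ := hr
  refine ⟨q, hq, ?_⟩
  simp only [Prod.smul_fst, Prod.smul_snd, Prod.fst_add, Prod.snd_add, smul_eq_mul,
    mul_inv_cancel_left₀ (three_ne_zero (α := ℝ))]
  rcases hd with rfl | rfl | rfl | rfl | rfl
  exacts [⟨(0, 0), by simp [digits]⟩, ⟨(1, 0), by simp [digits]⟩, ⟨(2, 0), by simp [digits]⟩,
    ⟨(2, 1), by simp [digits]⟩, ⟨(0, 2), by simp [digits]⟩]

theorem fst_le_of_two_thirds_lt_snd (h₁ : F ⊆ Icc 0 1 ×ˢ Icc 0 1)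
    (h₃ : IsTernarySubSelfSimilar digits F) {r : ℝ × ℝ} (hr : r ∈ F) (h : 2 / 3 < r.2) :
    r.1 ≤ 1 / 3 := by
  obtain ⟨q, hq, d, hd, h1, h2⟩ := h₃ r hr
  obtain ⟨⟨-, hq1⟩, -, hq2⟩ := h₁ hq
  rcases hd with rfl | rfl | rfl | rfl | rfl <;> norm_num at h1 h2 <;> linarith

/-- With `upperPart`: the copies of `F / 3 + (0, 2/3)` in `band F` and the line `y = 1` lie in
`upperPart`, the rest of `band F` in `lowerPart`, and the two sets are `1/9` apart. -/
def lowerPart : Set (ℝ × ℝ) :=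
  {r | r.2 ≤ 5 / 9 ∨ r.2 ≤ 2 / 3 ∧ ∃ k : ℤ, k + 2 / 3 ≤ r.1 ∧ r.1 ≤ k + 7 / 9}

def upperPart : Set (ℝ × ℝ) :=
  {r | r.2 = 1 ∨ 2 / 3 ≤ r.2 ∧ ∃ k : ℤ, k ≤ r.1 ∧ r.1 ≤ k + 1 / 3}

theorem le_dist_of_mem_lowerPart_of_mem_upperPart {a b : ℝ × ℝ} (ha : a ∈ lowerPart)
    (hb : b ∈ upperPart) : 1 / 9 ≤ dist a b := by
  have hx : |a.1 - b.1| ≤ dist a b := by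
    rw [Prod.dist_eq, Real.dist_eq]; exact le_max_left _ _
  have hy : |a.2 - b.2| ≤ dist a b := by
    rw [Prod.dist_eq, Real.dist_eq, Real.dist_eq]; exact le_max_right _ _
  have hy' := neg_le_abs (a.2 - b.2)
  rcases ha with ha | ⟨ha, k, hk, hk'⟩
  · rcases hb with hb | ⟨hb, -⟩ <;> linarith
  rcases hb with hb | ⟨-, l, hl, hl'⟩
  · linarith
  rcases le_or_gt l k with hlk | hlk
  · have : (l : ℝ) ≤ k := by exact_mod_cast hlk
    linarith [le_abs_self (a.1 - b.1)]
  · have : (k : ℝ) + 1 ≤ l := by exact_mod_cast hlk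
    linarith [neg_le_abs (a.1 - b.1)]

theorem band_subset_lowerPart_union_upperPart (h₁ : F ⊆ Icc 0 1 ×ˢ Icc 0 1)
    (h₃ : IsTernarySubSelfSimilar digits F) : band F ⊆ lowerPart ∪ upperPart := by
  rintro r (⟨k, hk⟩ | h0 | h1)
  · obtain ⟨q, hq, d, hd, hx, hy⟩ := h₃ _ hk
    obtain ⟨⟨hq₁, hq₁'⟩, hq₂, hq₂'⟩ := h₁ hq
    rcases hd with rfl | rfl | rfl | rfl | rfl <;> norm_num at hx hy
    · exact Or.inl (Or.inl (by linarith))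
    · exact Or.inl (Or.inl (by linarith))
    · exact Or.inl (Or.inl (by linarith))
    · by_cases h : r.2 ≤ 5 / 9
      · exact Or.inl (Or.inl h)
      have := fst_le_of_two_thirds_lt_snd h₁ h₃ hq (by linarith)
      exact Or.inl (Or.inr ⟨by linarith, k, by linarith, by linarith⟩)
    · exact Or.inr (Or.inr ⟨by linarith, k, by linarith, by linarith⟩)
  · exact Or.inl (Or.inl (by rw [h0]; norm_num))
  · exact Or.inr (Or.inl h1)

theorem noVerticalCrossing_band (h₁ : F ⊆ Icc 0 1 ×ˢ Icc 0 1)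
    (h₃ : IsTernarySubSelfSimilar digits F) : NoVerticalCrossing (band F) := by
  intro S hSW hSc p hp hp0 q hq hq1
  rcases hSc.subset_or_subset_of_le_dist (by norm_num : (0 : ℝ) < 1 / 9)
    (hSW.trans (band_subset_lowerPart_union_upperPart h₁ h₃))
    (fun a ha b hb => le_dist_of_mem_lowerPart_of_mem_upperPart ha hb) with h | h
  · rcases h hq with h | ⟨h, -⟩ <;> linarith
  · rcases h hp with h | ⟨h, -⟩ <;> linarith

end FractalSquare

theorem fractalSquare_components_point_or_horizontal_segment
    (F : Set (ℝ × ℝ)) (hFc : IsCompact F)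
    (hF : F = ⋃ d ∈ ({(0, 0), (1, 0), (2, 0), (2, 1), (0, 2)} : Set (ℝ × ℝ)),
      (fun x : ℝ × ℝ => (3 : ℝ)⁻¹ • (x + d)) '' F) :
    ∀ x ∈ F, (∃ p : ℝ × ℝ, connectedComponentIn F x = {p})
      ∨ (∃ a b c : ℝ, a < b ∧
          connectedComponentIn F x = Set.Icc a b ×ˢ ({c} : Set ℝ)) := by
  open FractalSquare in
  intro x hx
  have h₃ := isTernarySubSelfSimilar_digits hF
  have h₁ := subset_unitSquare hFc digits_subset h₃
  have hC := hFc.connectedComponentIn x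
  have hCW : connectedComponentIn F x ⊆ band F :=
    (connectedComponentIn_subset F x).trans subset_band
  have hxC := mem_connectedComponentIn hx
  exact eq_singleton_or_eq_Icc_prod_singleton hC isPreconnected_connectedComponentIn hxC
    fun p hp => snd_eq_of_subset_band h₁ h₃ (noVerticalCrossing_band h₁ h₃) hCW hC
      isPreconnected_connectedComponentIn hp hxC
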